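/- arXiv:1503.09135 — 3 statements merged into one kernel-verified Lean document; each statement's English description precedes it below -/
import Mathlib

section
/- With a = ((0.5 - α/2)² + β²)^(3/2) and b = ((0.5 + α/2)² + β²)^(3/2), and masses m = ab(a + b - 2ab)/((a+b)(a + b - 2ab + α(a-b))) and M = abα(a-b)/((a+b)(a + b - 2ab + α(a-b))), the pair (m, M) satisfies the central configuration equations 2M - m(α-1)/a + m(α+1)/b = λ and (m+M)/a + (m+M)/b = λ, where λ = (m+M)(1/a + 1/b). -/
theorem trapezoid_masses_satisfy_cc_equations
    (α β a b m M lam : ℝ) (hα : 0 < α) (hβ : 0 < β)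
    (ha : a = ((1/2 - α/2)^2 + β^2) ^ ((3:ℝ)/2))
    (hb : b = ((1/2 + α/2)^2 + β^2) ^ ((3:ℝ)/2))
    (hab : a + b ≠ 0)
    (hf3 : a + b - 2*a*b + α*(a - b) ≠ 0)
    (hm : m = a*b*(a + b - 2*a*b) / ((a + b) * (a + b - 2*a*b + α*(a - b))))
    (hM : M = a*b*α*(a - b) / ((a + b) * (a + b - 2*a*b + α*(a - b))))
    (hlam : lam = (m + M) * (1/a + 1/b)) :
    2*M - m*(α - 1)/a + m*(α + 1)/b = lam ∧ (m + M)/a + (m + M)/b = lam := by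
  have ha0 : 0 < a := by
    rw [ha]; positivity
  have hb0 : 0 < b := by
    rw [hb]; positivity
  subst hm hM hlam
  constructor <;> field_simp <;> ring
end

section
/- Let α, β > 0 and set a = ((1/2 - α/2)² + β²)^(3/2), b = ((1/2 + α/2)² + β²)^(3/2). The linear system in unknowns (m, M): 2M - m(α-1)/a + m(α+1)/b = λ and (m+M)(1/a + 1/b) = λ (with λ eliminated) has, up to scaling, the unique solution m = ab(a+b-2ab)/((a+b)(a+b-2ab+α(a-b))), M = abα(a-b)/((a+b)(a+b-2ab+α(a-b))), provided a + b - 2ab + α(a-b) ≠ 0. -/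
theorem trapezoid_cc_solution_unique_up_to_scaling
    (α β a b m M lam : ℝ) (hα : 0 < α) (hβ : 0 < β)
    (ha : a = ((1/2 - α/2)^2 + β^2) ^ ((3:ℝ)/2))
    (hb : b = ((1/2 + α/2)^2 + β^2) ^ ((3:ℝ)/2))
    (hf3 : a + b - 2*a*b + α*(a - b) ≠ 0)
    (heq1 : 2*M - m*(α - 1)/a + m*(α + 1)/b = lam)
    (heq2 : (m + M) * (1/a + 1/b) = lam) :
    ∃ c : ℝ,
      m = c * (a*b*(a + b - 2*a*b) / ((a + b) * (a + b - 2*a*b + α*(a - b)))) ∧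
      M = c * (a*b*α*(a - b) / ((a + b) * (a + b - 2*a*b + α*(a - b)))) := by
  have ha0 : 0 < a := by
    rw [ha]; exact Real.rpow_pos_of_pos (by positivity) _
  have hb0 : 0 < b := by
    rw [hb]; exact Real.rpow_pos_of_pos (by positivity) _
  have hane : a ≠ 0 := ha0.ne'
  have hbne : b ≠ 0 := hb0.ne'
  have habne : a + b ≠ 0 := by positivity
  have key : M * (a + b - 2*a*b) = m * (α * (a - b)) := by
    have h := heq1.trans heq2.symm
    field_simp at h
    linarith [h]
  have hd : a * b * ((a + b) * (a + b - 2*a*b + α*(a - b))) ≠ 0 :=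
    mul_ne_zero (mul_ne_zero hane hbne) (mul_ne_zero habne hf3)
  refine ⟨(m + M) * (a + b) / (a * b), ?_, ?_⟩
  · rw [div_mul_div_comm, eq_div_iff hd]
    linear_combination (-(a*b*(a+b))) * key
  · rw [div_mul_div_comm, eq_div_iff hd]
    linear_combination (a*b*(a+b)) * key
end

section
/- For all α, β > 0: if f₁ ≤ 0 then f₃ < 0, where f₁ = a + b - 2ab and f₃ = a + b - 2ab + α(a-b), with a = ((1/2-α/2)² + β²)^(3/2) and b = ((1/2+α/2)² + β²)^(3/2). Consequently, the region where both masses m, M of the trapezoidal central configuration are positive is exactly {(α,β) : α,β > 0 and f₁ < 0}. -/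
theorem trapezoid_positive_mass_region_eq_f1_neg
    (α β a b : ℝ) (hα : 0 < α) (hβ : 0 < β)
    (ha : a = ((1/2 - α/2)^2 + β^2) ^ ((3:ℝ)/2))
    (hb : b = ((1/2 + α/2)^2 + β^2) ^ ((3:ℝ)/2)) :
    (a + b - 2*a*b ≤ 0 → a + b - 2*a*b + α*(a - b) < 0) ∧
    ((0 < a*b*(a + b - 2*a*b) / ((a + b) * (a + b - 2*a*b + α*(a - b))) ∧
      0 < a*b*α*(a - b) / ((a + b) * (a + b - 2*a*b + α*(a - b)))) ↔
        a + b - 2*a*b < 0) := by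
  have ha0 : 0 < a := ha ▸ Real.rpow_pos_of_pos (by positivity) _
  have hb0 : 0 < b := hb ▸ Real.rpow_pos_of_pos (by positivity) _
  have hab : a < b := by
    rw [ha, hb]
    apply Real.rpow_lt_rpow (by positivity) ?_ (by norm_num)
    nlinarith
  have hneg : α * (a - b) < 0 := mul_neg_of_pos_of_neg hα (by linarith)
  refine ⟨fun h => by linarith, ?_, fun h1 => ?_⟩
  · rintro ⟨hm, hM⟩
    rw [div_pos_iff] at hm hM
    have hMn : a * b * α * (a - b) < 0 := by
      have := mul_neg_of_pos_of_neg (mul_pos (mul_pos ha0 hb0) hα) (show a - b < 0 by linarith)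
      linarith [this]
    rcases hM with ⟨hn, _⟩ | ⟨_, hd⟩
    · linarith
    · rcases hm with ⟨hn, hd'⟩ | ⟨hn, _⟩
      · linarith
      · nlinarith [mul_pos ha0 hb0]
  · have h3 : a + b - 2*a*b + α*(a - b) < 0 := by linarith
    have hd : (a + b) * (a + b - 2*a*b + α*(a - b)) < 0 :=
      mul_neg_of_pos_of_neg (by linarith) h3
    constructor
    · exact div_pos_of_neg_of_neg (mul_neg_of_pos_of_neg (mul_pos ha0 hb0) h1) hd
    · exact div_pos_of_neg_of_neg
        (mul_neg_of_pos_of_neg (mul_pos (mul_pos ha0 hb0) hα) (by linarith)) hd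
end
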